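/- For all reals p, T > 0 and A > 0 there exist constants C, R < ∞ such that for every integer N ≥ 1, Σ_{s ∈ N⁻¹ℤ_sym, s > R} (1 + s²)^N · e^{p s − N s² T / 2} ≤ C · e^{−A N}. -/

import Mathlib

open Classical

/-- The point of the lattice `N⁻¹ ℤ_sym` indexed by `k`, where `ℤ_sym = ℤ` for odd `N` and
`ℤ + 1/2` for even `N`. -/
noncomputable def latticePoint (N : ℕ) (k : ℤ) : ℝ :=
  ((k : ℝ) + (if Even N then (1 : ℝ) / 2 else 0)) / N

open Real

/-!
Since `1 + s² ≤ (1 + s)² ≤ e^{2s}`, the summand at a lattice point `s ≥ 1` is at most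
`exp (2Ns + ps - Ns²T/2)`, and as soon as `sT/2 ≥ 3 + |A| + |p|` the Gaussian term wins:
the summand is at most `e^{-AN} e^{-Ns}`. On the lattice `Ns = k + c` with `0 ≤ c ≤ 1/2`,
so `e^{-Ns} ≤ e^{-|k|}` at positive points, and `∑ₖ e^{-|k|}` does not depend on `N`.
-/

lemma Real.one_add_sq_le_exp_two_mul {s : ℝ} (hs : 0 ≤ s) : 1 + s ^ 2 ≤ exp (2 * s) :=
  calc 1 + s ^ 2 ≤ (s + 1) ^ 2 := by nlinarith
    _ ≤ exp s ^ 2 := pow_le_pow_left₀ (by positivity) (add_one_le_exp s) 2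
    _ = exp (2 * s) := by rw [← exp_nat_mul]; norm_num

lemma Real.summable_exp_neg_abs_int : Summable fun k : ℤ => exp (-|(k : ℝ)|) := by
  apply Summable.of_nat_of_neg <;>
    simpa only [Int.cast_neg, Int.cast_natCast, abs_neg, Nat.abs_cast] using summable_exp_neg_nat

lemma one_add_sq_pow_mul_exp_le {p T A s : ℝ} {N : ℕ} (hN : 1 ≤ N) (hs : 1 ≤ s)
    (hsT : 2 * (3 + |A| + |p|) ≤ T * s) :
    (1 + s ^ 2) ^ N * exp (p * s - N * s ^ 2 * T / 2) ≤ exp (-A * N) * exp (-(N * s)) := by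
  have hN' : (1 : ℝ) ≤ N := by exact_mod_cast hN
  have hpow : (1 + s ^ 2) ^ N ≤ exp (N * (2 * s)) := by
    rw [exp_nat_mul]
    exact pow_le_pow_left₀ (by positivity) (one_add_sq_le_exp_two_mul (by linarith)) N
  have hmargin : |p| * s ≤ s ^ 2 * T / 2 - 3 * s - A := by
    nlinarith [mul_le_mul_of_nonneg_left hsT (zero_le_one.trans hs),
      mul_nonneg (abs_nonneg A) (sub_nonneg.2 hs), le_abs_self A]
  have hexp : N * (2 * s) + (p * s - N * s ^ 2 * T / 2) ≤ -A * N + -(N * s) := by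
    nlinarith [mul_nonneg (sub_nonneg.2 hN') (mul_nonneg (abs_nonneg p) (zero_le_one.trans hs)),
      mul_nonneg (sub_nonneg.2 (le_abs_self p)) (zero_le_one.trans hs)]
  calc (1 + s ^ 2) ^ N * exp (p * s - N * s ^ 2 * T / 2)
      ≤ exp (N * (2 * s)) * exp (p * s - N * s ^ 2 * T / 2) := by gcongr
    _ ≤ exp (-A * N) * exp (-(N * s)) := by
      rw [← exp_add, ← exp_add]
      exact exp_le_exp.2 hexp

lemma natCast_mul_latticePoint {N : ℕ} (hN : N ≠ 0) (k : ℤ) :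
    N * latticePoint N k = k + if Even N then 1 / 2 else 0 := by
  unfold latticePoint
  field_simp

lemma abs_le_natCast_mul_latticePoint {N : ℕ} (hN : N ≠ 0) {k : ℤ}
    (hk : 0 < latticePoint N k) : |(k : ℝ)| ≤ N * latticePoint N k := by
  have hNk := natCast_mul_latticePoint hN k
  have hshift : (0 : ℝ) ≤ (if Even N then 1 / 2 else 0) ∧ (if Even N then 1 / 2 else 0) < (1 : ℝ) := by
    split_ifs <;> norm_num
  have hk0 : (0 : ℝ) ≤ k := by
    have : (-1 : ℝ) < k := by nlinarith [(Nat.cast_pos.2 (Nat.pos_of_ne_zero hN) : (0 : ℝ) < N)]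
    have : (-1 : ℤ) < k := by exact_mod_cast this
    exact_mod_cast (by omega : (0 : ℤ) ≤ k)
  rw [abs_of_nonneg hk0, hNk]
  linarith

lemma lattice_tail_term_le {p T A : ℝ} (hT : 0 < T) {N : ℕ} (hN : 1 ≤ N) (k : ℤ) :
    (if max 1 (2 * (3 + |A| + |p|) / T) < latticePoint N k then
        (1 + latticePoint N k ^ 2) ^ N *
          exp (p * latticePoint N k - (N : ℝ) * latticePoint N k ^ 2 * T / 2)
      else 0) ≤ exp (-A * N) * exp (-|(k : ℝ)|) := by
  split_ifs with hR
  · rw [max_lt_iff, div_lt_iff₀ hT] at hR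
    calc _ ≤ exp (-A * N) * exp (-(N * latticePoint N k)) :=
          one_add_sq_pow_mul_exp_le hN hR.1.le (by linarith)
      _ ≤ exp (-A * N) * exp (-|(k : ℝ)|) := by
          gcongr
          exact abs_le_natCast_mul_latticePoint (by omega) (by linarith)
  · positivity

theorem lattice_tail_sum_bound_general (p T A : ℝ) (hT : 0 < T) :
    ∃ C R : ℝ, ∀ N : ℕ, 1 ≤ N →
      (Summable fun k : ℤ =>
        if R < latticePoint N k then
          (1 + latticePoint N k ^ 2) ^ N *
            Real.exp (p * latticePoint N k - (N : ℝ) * latticePoint N k ^ 2 * T / 2)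
        else 0) ∧
      (∑' k : ℤ,
          if R < latticePoint N k then
            (1 + latticePoint N k ^ 2) ^ N *
              Real.exp (p * latticePoint N k - (N : ℝ) * latticePoint N k ^ 2 * T / 2)
          else 0) ≤ C * Real.exp (-A * N) := by
  refine ⟨∑' k : ℤ, exp (-|(k : ℝ)|), max 1 (2 * (3 + |A| + |p|) / T), fun N hN => ?_⟩
  have hmajorant := summable_exp_neg_abs_int.mul_left (exp (-A * N))
  have hle := lattice_tail_term_le (p := p) (A := A) hT hN
  have hsummable := hmajorant.of_nonneg_of_le (fun k => by split_ifs <;> positivity) hle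
  refine ⟨hsummable, ?_⟩
  calc _ ≤ ∑' k : ℤ, exp (-A * N) * exp (-|(k : ℝ)|) :=
        hsummable.tsum_le_tsum hle hmajorant
    _ = (∑' k : ℤ, exp (-|(k : ℝ)|)) * exp (-A * N) := by rw [tsum_mul_left, mul_comm]

/-- Tail estimate for sums over the lattice `N⁻¹ ℤ_sym`: the key step in the exponential bound
on the extreme particle of the discrete β-ensemble. -/
theorem lattice_tail_sum_bound (p T A : ℝ) (hp : 0 < p) (hT : 0 < T) (hA : 0 < A) :
    ∃ C R : ℝ, ∀ N : ℕ, 1 ≤ N →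
      (Summable fun k : ℤ =>
        if R < latticePoint N k then
          (1 + latticePoint N k ^ 2) ^ N *
            Real.exp (p * latticePoint N k - (N : ℝ) * latticePoint N k ^ 2 * T / 2)
        else 0) ∧
      (∑' k : ℤ,
          if R < latticePoint N k then
            (1 + latticePoint N k ^ 2) ^ N *
              Real.exp (p * latticePoint N k - (N : ℝ) * latticePoint N k ^ 2 * T / 2)
          else 0) ≤ C * Real.exp (-A * N) :=
  lattice_tail_sum_bound_general p T A hT
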